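/- arXiv:1604.03183 — 5 statements merged into one kernel-verified Lean document; each statement's English description precedes it below -/
import Mathlib

section
/- Let λ > 0, τ > 0 and SNR > 0 be real numbers, and set κ(τ) = 1 + √τ · arctan(√τ). Then πλ ∫_0^∞ exp(-πλ κ(τ) v - (τ/SNR) v²) dv = (π^{3/2} λ / √(τ/SNR)) · exp((λπκ(τ))²/(4τ/SNR)) · Q(λπκ(τ)/√(2τ/SNR)), where Q(x) = (1/√(2π)) ∫_x^∞ exp(-y²/2) dy. This is the downlink coverage probability of a Poisson cellular network with path loss exponent α = 4, BS density λ, SINR threshold τ, and signal-to-noise ratio SNR. -/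
/-! Completing the square, `-a v - b v² = a²/(4b) - (√(2b) v + a/√(2b))²/2`, so the affine substitution
`u = √(2b) v + a/√(2b)` turns `∫_0^∞ exp(-a v - b v²) dv` into a Gaussian tail integral from `a/√(2b)`.
Here `a = πλκ(τ)` and `b = τ/SNR`. -/

open MeasureTheory Real Set

/-- The standard Gaussian tail probability Q(x) = (1/√(2π)) ∫_x^∞ exp(-y²/2) dy. -/
noncomputable def gaussianQ (x : ℝ) : ℝ :=
  (1 / Real.sqrt (2 * Real.pi)) * ∫ y in Set.Ioi x, Real.exp (-y ^ 2 / 2)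

/-- κ(τ) = 1 + √τ · arctan(√τ). -/
noncomputable def kappa (τ : ℝ) : ℝ := 1 + Real.sqrt τ * Real.arctan (Real.sqrt τ)

theorem integral_comp_add_right_Ioi {E : Type*} [NormedAddCommGroup E] [NormedSpace ℝ E]
    (g : ℝ → E) (a c : ℝ) :
    ∫ x in Ioi a, g (x + c) = ∫ x in Ioi (a + c), g x := by
  rw [← (measurePreserving_add_right volume c).setIntegral_preimage_emb
    (measurableEmbedding_addRight c) g (Ioi (a + c)), preimage_add_const_Ioi, add_sub_cancel_right]

theorem exp_neg_mul_sub_mul_sq (a : ℝ) {b : ℝ} (hb : 0 < b) (v : ℝ) :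
    exp (-a * v - b * v ^ 2) =
      exp (a ^ 2 / (4 * b)) * exp (-(v * √(2 * b) + a / √(2 * b)) ^ 2 / 2) := by
  have hs : √(2 * b) ^ 2 = 2 * b := sq_sqrt (by positivity)
  rw [← exp_add, add_sq, mul_pow, div_pow, hs]
  congr 1
  field_simp
  ring

theorem integral_Ioi_exp_neg_mul_sub_mul_sq (a : ℝ) {b : ℝ} (hb : 0 < b) :
    ∫ v in Ioi 0, exp (-a * v - b * v ^ 2) =
      √(π / b) * exp (a ^ 2 / (4 * b)) * gaussianQ (a / √(2 * b)) := by
  have hs : 0 < √(2 * b) := by positivity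
  simp_rw [exp_neg_mul_sub_mul_sq a hb]
  rw [integral_const_mul,
    integral_comp_mul_right_Ioi (fun u ↦ exp (-(u + a / √(2 * b)) ^ 2 / 2)) 0 hs,
    zero_mul, integral_comp_add_right_Ioi (fun u ↦ exp (-u ^ 2 / 2)), zero_add, gaussianQ,
    smul_eq_mul, sqrt_mul zero_le_two, sqrt_mul zero_le_two, sqrt_div' _ hb.le]
  have : √2 ≠ 0 := by positivity
  have : √b ≠ 0 := by positivity
  have : √π ≠ 0 := by positivity
  field_simp

theorem coverage_alpha_four_with_noise_general (lam τ SNR : ℝ)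
    (hτ : 0 < τ) (hSNR : 0 < SNR) :
    Real.pi * lam *
        ∫ v in Set.Ioi (0 : ℝ),
          Real.exp (-(Real.pi * lam * kappa τ) * v - (τ / SNR) * v ^ 2) =
      (Real.pi ^ ((3 : ℝ) / 2) * lam / Real.sqrt (τ / SNR)) *
        Real.exp ((lam * Real.pi * kappa τ) ^ 2 / (4 * (τ / SNR))) *
        gaussianQ (lam * Real.pi * kappa τ / Real.sqrt (2 * (τ / SNR))) := by
  have hb : 0 < τ / SNR := div_pos hτ hSNR
  rw [integral_Ioi_exp_neg_mul_sub_mul_sq _ hb, mul_comm lam π,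
    show (3 : ℝ) / 2 = 1 + 1 / 2 by norm_num, rpow_add pi_pos, rpow_one, ← sqrt_eq_rpow,
    sqrt_div' _ hb.le]
  ring

/-- Downlink coverage probability of a Poisson cellular network with α = 4, BS density λ,
SINR threshold τ and signal-to-noise ratio SNR:
πλ ∫_0^∞ exp(-πλκ(τ)v - (τ/SNR)v²) dv
  = (π^{3/2}λ/√(τ/SNR)) · exp((λπκ(τ))²/(4τ/SNR)) · Q(λπκ(τ)/√(2τ/SNR)). -/
theorem coverage_alpha_four_with_noise (lam τ SNR : ℝ)
    (hlam : 0 < lam) (hτ : 0 < τ) (hSNR : 0 < SNR) :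
    Real.pi * lam *
        ∫ v in Set.Ioi (0 : ℝ),
          Real.exp (-(Real.pi * lam * kappa τ) * v - (τ / SNR) * v ^ 2) =
      (Real.pi ^ ((3 : ℝ) / 2) * lam / Real.sqrt (τ / SNR)) *
        Real.exp ((lam * Real.pi * kappa τ) ^ 2 / (4 * (τ / SNR))) *
        gaussianQ (lam * Real.pi * kappa τ / Real.sqrt (2 * (τ / SNR))) :=
  coverage_alpha_four_with_noise_general lam τ SNR hτ hSNR
end

section
/- For every real number c > 0, ∫_0^∞ (1 - e^{-c x^{-4}}) x dx = √(π c)/2. Consequently, for a homogeneous PPP of intensity λ with constant transmit power p and path loss exponent α = 4, the Laplace transform of the interference at the origin is E[e^{-sI}] = exp(-2πλ ∫_0^∞ (1 - e^{-s p x^{-4}}) x dx) = exp(-πλ √(π s p)) for s > 0. -/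
/-!
The substitution `y = x⁻²` turns `∫₀^∞ (1 - exp (-c x⁻⁴)) x dx` into
`½ ∫₀^∞ (1 - exp (-c y²)) / y² dy`. Integrating by parts against `-1 / y` (the boundary terms
vanish at `0` and at `∞`) leaves the Gaussian integral `∫₀^∞ 2c exp (-c y²) dy = √(π c)`.
The Laplace transform is the case `c = s p`.
-/

open MeasureTheory Real Set Filter Topology

theorem integral_Ioi_comp_rpow_neg_four_mul (f : ℝ → ℝ) :
    ∫ x in Ioi (0 : ℝ), f (x ^ (-4 : ℝ)) * x = (∫ y in Ioi (0 : ℝ), f (y ^ 2) / y ^ 2) / 2 := by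
  rw [← integral_div, ← integral_comp_rpow_Ioi (fun y ↦ f (y ^ 2) / y ^ 2 / 2)
    (by norm_num : (-2 : ℝ) ≠ 0)]
  refine setIntegral_congr_fun measurableSet_Ioi fun x (hx : 0 < x) ↦ ?_
  have hsq : (x ^ (-2 : ℝ)) ^ 2 = x ^ (-4 : ℝ) := by
    rw [← rpow_natCast, ← rpow_mul hx.le]; norm_num
  have hpow : x ^ ((-2 : ℝ) - 1) = x ^ (-4 : ℝ) * x := by
    rw [show (-2 : ℝ) - 1 = -4 + 1 by norm_num, rpow_add hx, rpow_one]
  have hne : x ^ (-4 : ℝ) ≠ 0 := (rpow_pos_of_pos hx _).ne'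
  rw [smul_eq_mul, hsq, hpow, abs_of_neg (by norm_num : (-2 : ℝ) < 0)]
  field_simp

theorem hasDerivAt_exp_neg_mul_sq (c y : ℝ) :
    HasDerivAt (fun u ↦ exp (-(c * u ^ 2))) (-(2 * c * y) * exp (-(c * y ^ 2))) y := by
  convert ((hasDerivAt_pow 2 y).const_mul c).fun_neg.exp using 1
  push_cast
  ring

theorem hasDerivAt_integral_exp_neg_mul_sq (c y : ℝ) :
    HasDerivAt (fun u ↦ ∫ t in (0 : ℝ)..u, exp (-(c * t ^ 2))) (exp (-(c * y ^ 2))) y := by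
  have hcont : Continuous fun t : ℝ ↦ exp (-(c * t ^ 2)) := by fun_prop
  exact intervalIntegral.integral_hasDerivAt_right (hcont.intervalIntegrable _ _)
    hcont.aestronglyMeasurable.stronglyMeasurableAtFilter hcont.continuousAt

theorem two_mul_mul_integral_gaussian_Ioi {c : ℝ} (hc : 0 < c) :
    2 * c * ∫ t in Ioi (0 : ℝ), exp (-(c * t ^ 2)) = √(π * c) := by
  simp only [← neg_mul, integral_gaussian_Ioi]
  rw [show π * c = c ^ 2 * (π / c) by field_simp, sqrt_mul (sq_nonneg c), sqrt_sq hc.le]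
  ring

noncomputable def oneSubExpNegMulSqDivSqPrimitive (c y : ℝ) : ℝ :=
  (exp (-(c * y ^ 2)) - 1) / y + 2 * c * ∫ t in (0 : ℝ)..y, exp (-(c * t ^ 2))

namespace oneSubExpNegMulSqDivSqPrimitive

theorem apply_zero (c : ℝ) : oneSubExpNegMulSqDivSqPrimitive c 0 = 0 := by
  simp [oneSubExpNegMulSqDivSqPrimitive]

theorem hasDerivAt (c : ℝ) {y : ℝ} (hy : y ≠ 0) :
    HasDerivAt (oneSubExpNegMulSqDivSqPrimitive c) ((1 - exp (-(c * y ^ 2))) / y ^ 2) y := by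
  refine ((((hasDerivAt_exp_neg_mul_sq c y).sub_const 1).fun_div (hasDerivAt_id' y) hy).fun_add
    ((hasDerivAt_integral_exp_neg_mul_sq c y).const_mul (2 * c))).congr_deriv ?_
  field_simp
  ring

theorem tendsto_nhdsGT_zero (c : ℝ) :
    Tendsto (oneSubExpNegMulSqDivSqPrimitive c) (𝓝[>] 0) (𝓝 0) := by
  have hslope : Tendsto (fun y ↦ (exp (-(c * y ^ 2)) - 1) / y) (𝓝[>] 0) (𝓝 0) := by
    simpa [div_eq_inv_mul] using (hasDerivAt_exp_neg_mul_sq c 0).tendsto_slope_zero_right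
  have hint : Tendsto (fun y ↦ 2 * c * ∫ t in (0 : ℝ)..y, exp (-(c * t ^ 2))) (𝓝[>] 0) (𝓝 0) := by
    simpa using ((hasDerivAt_integral_exp_neg_mul_sq c 0).continuousAt.tendsto.const_mul
      (2 * c)).mono_left nhdsWithin_le_nhds
  unfold oneSubExpNegMulSqDivSqPrimitive
  simpa only [add_zero] using hslope.add hint

theorem tendsto_atTop {c : ℝ} (hc : 0 < c) :
    Tendsto (oneSubExpNegMulSqDivSqPrimitive c) atTop (𝓝 (√(π * c))) := by
  have hexp : Tendsto (fun y : ℝ ↦ exp (-(c * y ^ 2))) atTop (𝓝 0) :=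
    tendsto_exp_neg_atTop_nhds_zero.comp ((tendsto_pow_atTop two_ne_zero).const_mul_atTop hc)
  have hfrac : Tendsto (fun y : ℝ ↦ (exp (-(c * y ^ 2)) - 1) / y) atTop (𝓝 0) := by
    simpa [div_eq_mul_inv] using (hexp.sub_const 1).mul tendsto_inv_atTop_zero
  have hgauss := (intervalIntegral_tendsto_integral_Ioi 0
    (integrable_exp_neg_mul_sq hc).integrableOn tendsto_id).const_mul (2 * c)
  simp only [neg_mul, id, two_mul_mul_integral_gaussian_Ioi hc] at hgauss
  unfold oneSubExpNegMulSqDivSqPrimitive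
  simpa only [zero_add] using hfrac.add hgauss

end oneSubExpNegMulSqDivSqPrimitive

theorem integral_Ioi_one_sub_exp_neg_mul_sq_div_sq {c : ℝ} (hc : 0 < c) :
    ∫ y in Ioi (0 : ℝ), (1 - exp (-(c * y ^ 2))) / y ^ 2 = √(π * c) := by
  have hnonneg : ∀ y ∈ Ioi (0 : ℝ), 0 ≤ (1 - exp (-(c * y ^ 2))) / y ^ 2 := fun y _ ↦
    div_nonneg (sub_nonneg.mpr (exp_le_one_iff.mpr (by nlinarith [sq_nonneg y]))) (sq_nonneg y)
  have hcont : ContinuousWithinAt (oneSubExpNegMulSqDivSqPrimitive c) (Ici 0) 0 := by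
    rw [← continuousWithinAt_Ioi_iff_Ici, ContinuousWithinAt,
      oneSubExpNegMulSqDivSqPrimitive.apply_zero]
    exact oneSubExpNegMulSqDivSqPrimitive.tendsto_nhdsGT_zero c
  rw [integral_Ioi_of_hasDerivAt_of_nonneg hcont
    (fun y hy ↦ oneSubExpNegMulSqDivSqPrimitive.hasDerivAt c (ne_of_gt hy)) hnonneg
    (oneSubExpNegMulSqDivSqPrimitive.tendsto_atTop hc),
    oneSubExpNegMulSqDivSqPrimitive.apply_zero, sub_zero]

theorem integral_Ioi_one_sub_exp_neg_mul_rpow_neg_four_mul {c : ℝ} (hc : 0 < c) :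
    ∫ x in Ioi (0 : ℝ), (1 - exp (-(c * x ^ (-(4 : ℝ))))) * x = √(π * c) / 2 := by
  rw [integral_Ioi_comp_rpow_neg_four_mul (fun u ↦ 1 - exp (-(c * u))),
    integral_Ioi_one_sub_exp_neg_mul_sq_div_sq hc]

theorem interference_laplace_alpha_four_general (c lam p s : ℝ)
    (hc : 0 < c) (hp : 0 < p) (hs : 0 < s) :
    (∫ x in Set.Ioi (0 : ℝ), (1 - Real.exp (-(c * x ^ (-(4 : ℝ))))) * x =
      Real.sqrt (Real.pi * c) / 2) ∧
    Real.exp (-(2 * Real.pi * lam *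
        ∫ x in Set.Ioi (0 : ℝ), (1 - Real.exp (-(s * p * x ^ (-(4 : ℝ))))) * x)) =
      Real.exp (-(Real.pi * lam * Real.sqrt (Real.pi * s * p))) := by
  refine ⟨integral_Ioi_one_sub_exp_neg_mul_rpow_neg_four_mul hc, ?_⟩
  rw [integral_Ioi_one_sub_exp_neg_mul_rpow_neg_four_mul (mul_pos hs hp), mul_assoc π s p]
  congr 1
  ring

/-- For c > 0:  ∫_0^∞ (1 - e^{-c x^{-4}}) x dx = √(πc)/2, and consequently for a
homogeneous PPP of intensity λ with transmit power p and path loss exponent 4, the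
Laplace transform of the interference at s > 0 is
exp(-2πλ ∫_0^∞ (1 - e^{-s p x^{-4}}) x dx) = exp(-πλ√(πsp)). -/
theorem interference_laplace_alpha_four (c lam p s : ℝ)
    (hc : 0 < c) (hlam : 0 < lam) (hp : 0 < p) (hs : 0 < s) :
    (∫ x in Set.Ioi (0 : ℝ), (1 - Real.exp (-(c * x ^ (-(4 : ℝ))))) * x =
      Real.sqrt (Real.pi * c) / 2) ∧
    Real.exp (-(2 * Real.pi * lam *
        ∫ x in Set.Ioi (0 : ℝ), (1 - Real.exp (-(s * p * x ^ (-(4 : ℝ))))) * x)) =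
      Real.exp (-(Real.pi * lam * Real.sqrt (Real.pi * s * p))) :=
  interference_laplace_alpha_four_general c lam p s hc hp hs
end

section
/- Let ι be a finite index set, let a : ι → ℝ be nonnegative (the received powers), let σ² ≥ 0, let m ≥ 1 be a natural number, and let τ ≥ 1/m be a real threshold. Then the set of indices i ∈ ι such that a_i / (Σ_{j ≠ i} a_j + σ²) > τ has cardinality at most m. In particular, if τ > 1 then at most one index can satisfy the SINR coverage condition. -/
/-!
If transmitter `i` is covered, `τ · (Σ_{j ≠ i} a_j + σ²) < a_i`; adding `τ a_i` to both sides gives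
`τ W < (1 + τ) a_i` with `W = Σ_j a_j + σ²` the same for every `i`. Summing over the covered set
`S` and using `Σ_{i ∈ S} a_i ≤ W` yields `|S| τ < 1 + τ ≤ (m + 1) τ`, so `|S| ≤ m`.
-/

open Finset

section

variable {ι : Type*}

noncomputable def sinr [DecidableEq ι] (s : Finset ι) (a : ι → ℝ) (σ2 : ℝ) (i : ι) : ℝ :=
  a i / (∑ j ∈ s.erase i, a j + σ2)

theorem mul_sum_add_lt_of_lt_sinr [DecidableEq ι] {s : Finset ι} {a : ι → ℝ}
    (ha : ∀ j ∈ s, 0 ≤ a j) {σ2 τ : ℝ} (hσ2 : 0 ≤ σ2) (hτ : 0 < τ) {i : ι} (hi : i ∈ s)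
    (hcov : τ < sinr s a σ2 i) :
    τ * (∑ j ∈ s, a j + σ2) < (1 + τ) * a i := by
  have hD_nonneg : 0 ≤ ∑ j ∈ s.erase i, a j + σ2 :=
    add_nonneg (sum_nonneg fun j hj => ha j (mem_of_mem_erase hj)) hσ2
  have hD_pos : 0 < ∑ j ∈ s.erase i, a j + σ2 := by
    refine hD_nonneg.lt_of_ne fun hD => ?_
    rw [sinr, ← hD, div_zero] at hcov
    exact hcov.not_gt hτ
  have hτD := (lt_div_iff₀ hD_pos).mp hcov
  rw [sum_erase_eq_sub hi] at hτD
  linarith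

theorem Finset.card_mul_lt_of_forall_mul_lt_mul {s t : Finset ι} (hts : t ⊆ s) {a : ι → ℝ}
    (ha : ∀ j ∈ s, 0 ≤ a j) {W p q : ℝ} (hW : ∑ j ∈ s, a j ≤ W) (hq : 0 < q)
    (h : ∀ i ∈ t, p * W < q * a i) :
    #t * p < q := by
  obtain rfl | ht := t.eq_empty_or_nonempty
  · simpa using hq
  obtain ⟨i, hi⟩ := ht
  have hsum_le : ∑ j ∈ t, a j ≤ W :=
    (sum_le_sum_of_subset_of_nonneg hts fun j hj _ => ha j hj).trans hW
  have hW_pos : 0 < W := by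
    have hW_nonneg : 0 ≤ W := (sum_nonneg ha).trans hW
    have hai_le : a i ≤ W := (single_le_sum (fun j hj => ha j (hts hj)) hi).trans hsum_le
    refine hW_nonneg.lt_of_ne fun hW0 => ?_
    have := (h i hi).trans_le (mul_le_mul_of_nonneg_left hai_le hq.le)
    rw [← hW0, mul_zero, mul_zero] at this
    exact this.false
  have : #t * p * W < q * W := calc
    #t * p * W = ∑ _j ∈ t, p * W := by rw [sum_const, nsmul_eq_mul, mul_assoc]
    _ < ∑ j ∈ t, q * a j := sum_lt_sum_of_nonempty ⟨i, hi⟩ h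
    _ = q * ∑ j ∈ t, a j := (mul_sum ..).symm
    _ ≤ q * W := mul_le_mul_of_nonneg_left hsum_le hq.le
  exact lt_of_mul_lt_mul_right this hW_pos.le

end

/-- For nonnegative received powers a : ι → ℝ on a finite index set, noise σ² ≥ 0,
m ≥ 1 and threshold τ ≥ 1/m, at most m indices can satisfy the SINR condition
a_i / (Σ_{j≠i} a_j + σ²) > τ. -/
theorem sinr_coverage_at_most_m {ι : Type*} [Fintype ι] [DecidableEq ι]
    (a : ι → ℝ) (ha : ∀ i, 0 ≤ a i) (σ2 : ℝ) (hσ2 : 0 ≤ σ2)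
    (m : ℕ) (hm : 1 ≤ m) (τ : ℝ) (hτ : 1 / (m : ℝ) ≤ τ) :
    (Finset.univ.filter
        (fun i => τ < a i / ((∑ j ∈ Finset.univ.erase i, a j) + σ2))).card ≤ m := by
  change #(univ.filter fun i => τ < sinr univ a σ2 i) ≤ m
  set S := univ.filter fun i => τ < sinr univ a σ2 i
  have hm_pos : (0 : ℝ) < m := by exact_mod_cast hm
  have hτ_pos : 0 < τ := (one_div_pos.mpr hm_pos).trans_le hτ
  have hmτ : 1 ≤ m * τ := by rwa [div_le_iff₀' hm_pos] at hτ
  have hS : #S * τ < 1 + τ :=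
    card_mul_lt_of_forall_mul_lt_mul (filter_subset _ _) (fun j _ => ha j)
      (le_add_of_nonneg_right hσ2) (by linarith)
      fun i hi => mul_sum_add_lt_of_lt_sinr (fun j _ => ha j) hσ2 hτ_pos (mem_univ i)
        (mem_filter.mp hi).2
  have : (#S : ℝ) < m + 1 := lt_of_mul_lt_mul_right (by linarith) hτ_pos.le
  exact Nat.lt_succ_iff.mp (by exact_mod_cast this)
end

section
/- For all real numbers λ > 0, c > 0 and α > 2, the following double-integral identity holds: 2πλ ∫_0^∞ x · (∫_0^{x²} (πλ e^{-πλ u}) / (1 + c^{-1} u^{-α/2} x^{α}) du) dx = 2 ∫_1^∞ v / (1 + c^{-1} v^{α}) dv. In particular, the left-hand side does not depend on λ. -/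
open MeasureTheory Real Set
open scoped ENNReal

/-!
Swap the order of integration over the region `0 < u ≤ x²`. For fixed `u > 0` the substitution
`x = √u · v` turns the `x`-integral into `πλ e^{-πλu} · u · ∫_1^∞ v / (1 + c⁻¹ v^α) dv`, and
`∫_0^∞ u · πλ e^{-πλu} du = (πλ)⁻¹` cancels the prefactor `2πλ`. Everything is done with lower
Lebesgue integrals of nonnegative functions, where Tonelli and the change of variables need no
integrability; the Bochner integrals are their `toReal`, which stays true when they diverge
(both junk values are then `0`).
-/

theorem lintegral_comp_mul_left_Ioi' (g : ℝ → ℝ≥0∞) (a : ℝ) {b : ℝ} (hb : 0 < b) :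
    ENNReal.ofReal b * ∫⁻ x in Ioi a, g (b * x) = ∫⁻ x in Ioi (b * a), g x := by
  have hderiv : ∀ x ∈ Ioi a, HasDerivWithinAt (b * ·) b (Ioi a) x := fun x _ ↦ by
    simpa using ((hasDerivAt_id x).const_mul b).hasDerivWithinAt
  rw [← image_mul_left_Ioi hb, lintegral_image_eq_lintegral_abs_deriv_mul measurableSet_Ioi
    hderiv (mul_right_injective₀ hb.ne').injOn, abs_of_pos hb, lintegral_const_mul' _ _ (by simp)]

theorem measurable_setLIntegral_Ioc {α : Type*} [MeasurableSpace α] {F : α → ℝ → ℝ≥0∞}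
    (hF : Measurable (Function.uncurry F)) {a b : α → ℝ} (ha : Measurable a) (hb : Measurable b) :
    Measurable fun x ↦ ∫⁻ u in Ioc (a x) (b x), F x u := by
  have hS : MeasurableSet {p : α × ℝ | a p.1 < p.2 ∧ p.2 ≤ b p.1} :=
    (measurableSet_lt (ha.comp measurable_fst) measurable_snd).inter
      (measurableSet_le measurable_snd (hb.comp measurable_fst))
  have hslice : ∀ x, ∫⁻ u in Ioc (a x) (b x), F x u
      = ∫⁻ u, {p : α × ℝ | a p.1 < p.2 ∧ p.2 ≤ b p.1}.indicator (Function.uncurry F) (x, u) := by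
    intro x
    rw [← lintegral_indicator measurableSet_Ioc]
    rfl
  simp_rw [hslice]
  exact (hF.indicator hS).lintegral_prod_right'

def sqRegion : Set (ℝ × ℝ) := {p | 0 < p.1 ∧ 0 < p.2 ∧ p.2 ≤ p.1 ^ 2}

theorem measurableSet_sqRegion : MeasurableSet sqRegion :=
  (measurableSet_lt measurable_const measurable_fst).inter <|
    (measurableSet_lt measurable_const measurable_snd).inter <|
      measurableSet_le measurable_snd (measurable_fst.pow_const 2)

theorem lintegral_indicator_sqRegion_left (F : ℝ → ℝ → ℝ≥0∞) (x : ℝ) :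
    ∫⁻ u, sqRegion.indicator (Function.uncurry F) (x, u)
      = (Ioi 0).indicator (fun x ↦ ∫⁻ u in Ioc 0 (x ^ 2), F x u) x := by
  by_cases hx : 0 < x
  · rw [indicator_of_mem (mem_Ioi.2 hx), ← lintegral_indicator measurableSet_Ioc]
    congr 1 with u
    simp [indicator, sqRegion, hx]
  · simp [indicator, sqRegion, hx]

theorem lintegral_indicator_sqRegion_right (F : ℝ → ℝ → ℝ≥0∞) (u : ℝ) :
    ∫⁻ x, sqRegion.indicator (Function.uncurry F) (x, u)
      = (Ioi 0).indicator (fun u ↦ ∫⁻ x in Ici √u, F x u) u := by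
  by_cases hu : 0 < u
  · rw [indicator_of_mem (mem_Ioi.2 hu), ← lintegral_indicator measurableSet_Ici]
    congr 1 with x
    have hmem : (x, u) ∈ sqRegion ↔ x ∈ Ici √u := by
      rw [mem_Ici, sqrt_le_iff]
      exact ⟨fun h ↦ ⟨h.1.le, h.2.2⟩,
        fun h ↦ ⟨(sqrt_pos.2 hu).trans_le (sqrt_le_iff.2 h), hu, h.2⟩⟩
    simp only [indicator, hmem]
    rfl
  · simp [indicator, sqRegion, hu]

theorem lintegral_Ioi_lintegral_Ioc_sq_swap {F : ℝ → ℝ → ℝ≥0∞}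
    (hF : Measurable (Function.uncurry F)) :
    ∫⁻ x in Ioi 0, ∫⁻ u in Ioc 0 (x ^ 2), F x u = ∫⁻ u in Ioi 0, ∫⁻ x in Ici √u, F x u := by
  rw [← lintegral_indicator measurableSet_Ioi, ← lintegral_indicator measurableSet_Ioi]
  simp_rw [← lintegral_indicator_sqRegion_left, ← lintegral_indicator_sqRegion_right]
  exact lintegral_lintegral_swap (hF.indicator measurableSet_sqRegion).aemeasurable

theorem lintegral_Ioi_lintegral_Ioc_sq_mul_comp_div_sqrt {f φ : ℝ → ℝ≥0∞} (hf : Measurable f)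
    (hφ : Measurable φ) :
    ∫⁻ x in Ioi 0, ∫⁻ u in Ioc 0 (x ^ 2), ENNReal.ofReal x * f u * φ (x / √u)
      = (∫⁻ u in Ioi 0, ENNReal.ofReal u * f u) * ∫⁻ v in Ioi 1, ENNReal.ofReal v * φ v := by
  rw [lintegral_Ioi_lintegral_Ioc_sq_swap (by fun_prop), ← lintegral_mul_const _ (by fun_prop)]
  refine setLIntegral_congr_fun measurableSet_Ioi fun u hu ↦ ?_
  have hs : 0 < √u := sqrt_pos.2 hu
  have hscaled : ∀ v, ENNReal.ofReal (√u * v) * f u * φ (√u * v / √u)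
      = ENNReal.ofReal √u * f u * (ENNReal.ofReal v * φ v) := fun v ↦ by
    rw [mul_div_cancel_left₀ _ hs.ne', ENNReal.ofReal_mul hs.le]
    ring
  have hsubst := lintegral_comp_mul_left_Ioi' (fun x ↦ ENNReal.ofReal x * f u * φ (x / √u)) 1 hs
  rw [mul_one] at hsubst
  rw [setLIntegral_congr Ioi_ae_eq_Ici.symm, ← hsubst]
  simp_rw [hscaled]
  rw [lintegral_const_mul _ (by fun_prop), ← mul_assoc, ← mul_assoc, ← ENNReal.ofReal_mul hs.le,
    mul_self_sqrt (mem_Ioi.1 hu).le]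

theorem integral_Ioi_mul_eq_toReal_lintegral {g : ℝ → ℝ} {a : ℝ} (ha : 0 ≤ a) (hg : Measurable g)
    (hg0 : ∀ v > a, 0 ≤ g v) :
    ∫ v in Ioi a, v * g v = (∫⁻ v in Ioi a, ENNReal.ofReal v * ENNReal.ofReal (g v)).toReal := by
  rw [integral_eq_lintegral_of_nonneg_ae _ (by fun_prop)]
  · congr 1
    refine setLIntegral_congr_fun measurableSet_Ioi fun v hv ↦ ?_
    exact ENNReal.ofReal_mul (ha.trans (le_of_lt hv))
  · filter_upwards [ae_restrict_mem measurableSet_Ioi] with v hv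
    exact mul_nonneg (ha.trans (le_of_lt hv)) (hg0 v hv)

theorem integral_Ioi_mul_intervalIntegral_sq_mul_comp_div_sqrt {f φ : ℝ → ℝ} (hf : Measurable f)
    (hφ : Measurable φ) {M K : ℝ} (hf0 : ∀ u > 0, 0 ≤ f u) (hfM : ∀ u > 0, f u ≤ M)
    (hφ0 : ∀ v > 0, 0 ≤ φ v) (hφK : ∀ v > 0, φ v ≤ K) :
    ∫ x in Ioi 0, x * ∫ u in 0..x ^ 2, f u * φ (x / √u)
      = (∫ u in Ioi 0, u * f u) * ∫ v in Ioi 1, v * φ v := by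
  set F : ℝ → ℝ → ℝ≥0∞ := fun x u ↦
    ENNReal.ofReal x * ENNReal.ofReal (f u) * ENNReal.ofReal (φ (x / √u)) with hF
  have hinner : ∀ x ∈ Ioi 0, x * ∫ u in 0..x ^ 2, f u * φ (x / √u)
      = (∫⁻ u in Ioc 0 (x ^ 2), F x u).toReal := by
    intro x hx
    have hpos : ∀ u ∈ Ioc 0 (x ^ 2), 0 ≤ f u ∧ 0 ≤ φ (x / √u) := fun u hu ↦
      ⟨hf0 u hu.1, hφ0 _ (div_pos hx (sqrt_pos.2 hu.1))⟩
    rw [intervalIntegral.integral_of_le (sq_nonneg x), ← integral_const_mul,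
      integral_eq_lintegral_of_nonneg_ae _ (by fun_prop)]
    · congr 1
      refine setLIntegral_congr_fun measurableSet_Ioc fun u hu ↦ ?_
      rw [← mul_assoc, ENNReal.ofReal_mul (by nlinarith [hpos u hu, mem_Ioi.1 hx]),
        ENNReal.ofReal_mul (le_of_lt hx)]
    · filter_upwards [ae_restrict_mem measurableSet_Ioc] with u hu
      exact mul_nonneg (le_of_lt hx) (mul_nonneg (hpos u hu).1 (hpos u hu).2)
  have hfinite : ∀ x ∈ Ioi 0, ∫⁻ u in Ioc 0 (x ^ 2), F x u < ∞ := by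
    intro x hx
    calc ∫⁻ u in Ioc 0 (x ^ 2), F x u
        ≤ ∫⁻ u in Ioc 0 (x ^ 2), ENNReal.ofReal x * ENNReal.ofReal M * ENNReal.ofReal K := by
          refine setLIntegral_mono' measurableSet_Ioc fun u hu ↦ ?_
          simp only [hF]
          gcongr
          exacts [hfM u hu.1, hφK _ (div_pos hx (sqrt_pos.2 hu.1))]
      _ < ∞ := by
          rw [setLIntegral_const]
          exact ENNReal.mul_lt_top (by finiteness) measure_Ioc_lt_top
  rw [setIntegral_congr_fun measurableSet_Ioi hinner,
    integral_toReal ((measurable_setLIntegral_Ioc (by fun_prop) measurable_const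
      (by fun_prop)).aemeasurable) ((ae_restrict_iff' measurableSet_Ioi).2 (.of_forall hfinite))]
  simp only [hF]
  rw [lintegral_Ioi_lintegral_Ioc_sq_mul_comp_div_sqrt hf.ennreal_ofReal hφ.ennreal_ofReal,
    ENNReal.toReal_mul, integral_Ioi_mul_eq_toReal_lintegral le_rfl hf hf0,
    integral_Ioi_mul_eq_toReal_lintegral zero_le_one hφ fun v hv ↦ hφ0 v (zero_lt_one.trans hv)]

theorem integral_Ioi_mul_exp_neg_mul {b : ℝ} (hb : 0 < b) :
    ∫ u in Ioi 0, u * exp (-(b * u)) = (b ^ 2)⁻¹ := by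
  have h := integral_rpow_mul_exp_neg_mul_Ioi two_pos hb
  norm_num [Gamma_two] at h
  simpa using h

theorem rpow_div_sqrt {x u : ℝ} (hx : 0 ≤ x) (hu : 0 < u) (α : ℝ) :
    (x / √u) ^ α = u ^ (-(α / 2)) * x ^ α := by
  rw [div_rpow hx (sqrt_nonneg u), sqrt_eq_rpow, ← rpow_mul hu.le, rpow_neg hu.le]
  ring_nf

theorem uplink_laplace_exponent_full_power_control_general (lam c α : ℝ)
    (hlam : 0 < lam) (hc : 0 < c) :
    2 * Real.pi * lam *
        ∫ x in Set.Ioi (0 : ℝ),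
          x * ∫ u in (0 : ℝ)..x ^ 2,
            (Real.pi * lam * Real.exp (-(Real.pi * lam * u))) /
              (1 + c⁻¹ * u ^ (-(α / 2)) * x ^ α) =
      2 * ∫ v in Set.Ioi (1 : ℝ), v / (1 + c⁻¹ * v ^ α) := by
  have hβ : 0 < π * lam := mul_pos pi_pos hlam
  have hden : ∀ v > 0, 1 ≤ 1 + c⁻¹ * v ^ α := fun v hv ↦ le_add_of_nonneg_right (by positivity)
  have hscale : ∀ x ∈ Ioi 0, x * ∫ u in 0..x ^ 2,
        π * lam * exp (-(π * lam * u)) / (1 + c⁻¹ * u ^ (-(α / 2)) * x ^ α)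
      = x * ∫ u in 0..x ^ 2, π * lam * exp (-(π * lam * u)) * (1 + c⁻¹ * (x / √u) ^ α)⁻¹ := by
    intro x hx
    refine congrArg _ (intervalIntegral.integral_congr_ae (.of_forall fun u hu ↦ ?_))
    rw [uIoc_of_le (sq_nonneg x)] at hu
    rw [rpow_div_sqrt (le_of_lt hx) hu.1, div_eq_mul_inv, mul_assoc c⁻¹]
  have hmean : ∫ u in Ioi 0, u * (π * lam * exp (-(π * lam * u))) = (π * lam)⁻¹ := by
    simp_rw [mul_left_comm _ (π * lam)]
    rw [integral_const_mul, integral_Ioi_mul_exp_neg_mul hβ]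
    field_simp
  rw [setIntegral_congr_fun measurableSet_Ioi hscale,
    integral_Ioi_mul_intervalIntegral_sq_mul_comp_div_sqrt (M := π * lam) (K := 1) (by fun_prop)
      (by fun_prop) (fun u _ ↦ by positivity)
      (fun u hu ↦ mul_le_of_le_one_right hβ.le (exp_le_one_iff.2 (by nlinarith)))
      (fun v hv ↦ inv_nonneg.2 (zero_le_one.trans (hden v hv)))
      (fun v hv ↦ inv_le_one_of_one_le₀ (hden v hv)), hmean]
  simp only [← div_eq_mul_inv]
  rw [mul_assoc 2 π lam, ← mul_assoc, mul_assoc 2, mul_inv_cancel₀ hβ.ne', mul_one]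

/-- Exponent of the Laplace transform of uplink interference under full channel-inversion
power control: for λ > 0, c > 0 and α > 2,
2πλ ∫_0^∞ x (∫_0^{x²} πλ e^{-πλu} / (1 + c⁻¹ u^{-α/2} x^α) du) dx
  = 2 ∫_1^∞ v / (1 + c⁻¹ v^α) dv,
independent of λ. -/
theorem uplink_laplace_exponent_full_power_control (lam c α : ℝ)
    (hlam : 0 < lam) (hc : 0 < c) (hα : 2 < α) :
    2 * Real.pi * lam *
        ∫ x in Set.Ioi (0 : ℝ),
          x * ∫ u in (0 : ℝ)..x ^ 2,
            (Real.pi * lam * Real.exp (-(Real.pi * lam * u))) /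
              (1 + c⁻¹ * u ^ (-(α / 2)) * x ^ α) =
      2 * ∫ v in Set.Ioi (1 : ℝ), v / (1 + c⁻¹ * v ^ α) :=
  uplink_laplace_exponent_full_power_control_general lam c α hlam hc
end

section
/- Let k ≥ 1, let λ_1,…,λ_k > 0, p_1,…,p_k > 0 and α > 2 be real numbers, and fix i ∈ {1,…,k}. Then ∫_0^∞ 2πλ_i r · exp(-π r² Σ_{j=1}^{k} λ_j (p_j/p_i)^{2/α}) dr = λ_i p_i^{2/α} / (Σ_{j=1}^{k} λ_j p_j^{2/α}). In particular these quantities are nonnegative and sum to 1 over i = 1,…,k, so they form a probability distribution (the per-tier association probabilities). -/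
open MeasureTheory Real Set

/-!
The integrand is `2πλ_i r e^{-b r²}` with `b = π Σ_j λ_j (p_j/p_i)^{2/α}`, and
`∫_0^∞ r e^{-b r²} dr = 1/(2b)` since `-e^{-b r²}/(2b)` is a primitive. Pulling `p_i^{-2/α}` out of
the sum in `b` turns `λ_i / Σ_j λ_j (p_j/p_i)^{2/α}` into the normalized weight
`λ_i p_i^{2/α} / Σ_j λ_j p_j^{2/α}`.
-/

theorem integral_Ioi_mul_exp_neg_mul_sq {b : ℝ} (hb : 0 < b) :
    ∫ r in Ioi (0 : ℝ), r * exp (-b * r ^ 2) = (2 * b)⁻¹ := by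
  have h := integral_mul_cexp_neg_mul_sq (b := (b : ℂ)) (by simpa using hb)
  rw [← Complex.ofReal_inj, ← integral_complex_ofReal]
  push_cast
  exact h

theorem Finset.sum_mul_div_rpow {ι : Type*} (s : Finset ι) (w p : ι → ℝ) {q : ℝ}
    (hp : ∀ j ∈ s, 0 ≤ p j) (hq : 0 ≤ q) (t : ℝ) :
    ∑ j ∈ s, w j * (p j / q) ^ t = (∑ j ∈ s, w j * p j ^ t) / q ^ t := by
  rw [Finset.sum_div]
  refine Finset.sum_congr rfl fun j hj => ?_
  rw [div_rpow (hp j hj) hq, mul_div_assoc]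

theorem hetnet_association_probability_general (k : ℕ)
    (lam p : Fin k → ℝ) (hlam : ∀ i, 0 < lam i) (hp : ∀ i, 0 < p i)
    (α : ℝ) (i : Fin k) :
    (∫ r in Set.Ioi (0 : ℝ),
        2 * Real.pi * lam i * r *
          Real.exp (-(Real.pi * r ^ 2 * ∑ j, lam j * (p j / p i) ^ (2 / α))) =
      lam i * p i ^ (2 / α) / ∑ j, lam j * p j ^ (2 / α)) ∧
    (0 ≤ lam i * p i ^ (2 / α) / ∑ j, lam j * p j ^ (2 / α)) ∧
    ∑ i', lam i' * p i' ^ (2 / α) / ∑ j, lam j * p j ^ (2 / α) = 1 := by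
  set S := ∑ j, lam j * p j ^ (2 / α)
  have hweight : ∀ j, 0 < lam j * p j ^ (2 / α) := fun j =>
    mul_pos (hlam j) (rpow_pos_of_pos (hp j) _)
  have hS : 0 < S := Finset.sum_pos (fun j _ => hweight j) ⟨i, Finset.mem_univ i⟩
  have hpi : 0 < p i ^ (2 / α) := rpow_pos_of_pos (hp i) _
  have hsum : ∑ j, lam j * (p j / p i) ^ (2 / α) = S / p i ^ (2 / α) :=
    Finset.sum_mul_div_rpow _ _ _ (fun j _ => (hp j).le) (hp i).le _
  refine ⟨?_, div_nonneg (hweight i).le hS.le, by rw [← Finset.sum_div, div_self hS.ne']⟩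
  calc _ = 2 * π * lam i * ∫ r in Ioi (0 : ℝ), r * exp (-(π * (S / p i ^ (2 / α))) * r ^ 2) := by
        rw [hsum, ← integral_const_mul]
        congr with r
        ring_nf
    _ = lam i * p i ^ (2 / α) / S := by
        rw [integral_Ioi_mul_exp_neg_mul_sq (by positivity)]
        field_simp

/-- Per-tier association probabilities in a k-tier HetNet with maximum-average-power
cell association: for each tier i,
∫_0^∞ 2πλ_i r exp(-π r² Σ_j λ_j (p_j/p_i)^{2/α}) dr = λ_i p_i^{2/α} / Σ_j λ_j p_j^{2/α};
these quantities are nonnegative and sum to 1 over i. -/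
theorem hetnet_association_probability (k : ℕ) (hk : 1 ≤ k)
    (lam p : Fin k → ℝ) (hlam : ∀ i, 0 < lam i) (hp : ∀ i, 0 < p i)
    (α : ℝ) (hα : 2 < α) (i : Fin k) :
    (∫ r in Set.Ioi (0 : ℝ),
        2 * Real.pi * lam i * r *
          Real.exp (-(Real.pi * r ^ 2 * ∑ j, lam j * (p j / p i) ^ (2 / α))) =
      lam i * p i ^ (2 / α) / ∑ j, lam j * p j ^ (2 / α)) ∧
    (0 ≤ lam i * p i ^ (2 / α) / ∑ j, lam j * p j ^ (2 / α)) ∧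
    ∑ i', lam i' * p i' ^ (2 / α) / ∑ j, lam j * p j ^ (2 / α) = 1 :=
  hetnet_association_probability_general k lam p hlam hp α i
end
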